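/- For every real number s ≥ 2, the sum over all prime numbers p of (log p)/p^s is strictly less than 1. -/

import Mathlib

open Real Finset

/-- the majorant: `log n / n^2` at primes, `0` elsewhere. -/
noncomputable def gfun (n : ℕ) : ℝ := if n.Prime then Real.log n / (n : ℝ) ^ 2 else 0

lemma gfun_nonneg (n : ℕ) : 0 ≤ gfun n := by
  unfold gfun
  split
  · rename_i h
    apply div_nonneg
    · exact Real.log_nonneg (by exact_mod_cast h.one_lt.le)
    · positivity
  · exact le_rfl

lemma key (n : ℕ) (hn : 2 ≤ n) :
    gfun n ≤ (Real.log n + 1) / ((n : ℝ) - 1) - (Real.log ((n : ℝ) + 1) + 1) / n := by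
  have ht : (2 : ℝ) ≤ (n : ℝ) := by exact_mod_cast hn
  have ht0 : (0 : ℝ) < (n : ℝ) := by linarith
  have ha : 0 ≤ Real.log n := Real.log_nonneg (by linarith)
  have hlog : Real.log ((n : ℝ) + 1) ≤ Real.log n + 1 / n := by
    have h1 : Real.log ((n : ℝ) + 1) - Real.log n = Real.log (((n : ℝ) + 1) / n) := by
      rw [Real.log_div (by linarith) (by linarith)]
    have h2 : Real.log (((n : ℝ) + 1) / n) ≤ ((n : ℝ) + 1) / n - 1 :=
      Real.log_le_sub_one_of_pos (by positivity)
    have h3 : ((n : ℝ) + 1) / n - 1 = 1 / n := by field_simp; ring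
    linarith
  have hne1 : (n : ℝ) ≠ 0 := by linarith
  have hne2 : (n : ℝ) - 1 ≠ 0 := by intro h; nlinarith
  have e1 : (Real.log n + 1) / ((n : ℝ) - 1) - (Real.log n + 1) / n
      = (Real.log n + 1) / ((n : ℝ) * ((n : ℝ) - 1)) := by
    rw [div_sub_div _ _ hne2 hne1, mul_comm ((n:ℝ) - 1) (n:ℝ)]
    congr 1
    ring
  have e2 : (Real.log n + 1 / (n : ℝ) + 1) / n = (Real.log n + 1) / (n : ℝ) + 1 / (n : ℝ) ^ 2 := by
    field_simp
    ring
  have e3 : (Real.log n + 1) / ((n : ℝ)) ^ 2 = Real.log n / (n : ℝ) ^ 2 + 1 / (n : ℝ) ^ 2 := by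
    rw [add_div]
  have h1 : (Real.log n + 1) / ((n : ℝ) ^ 2) ≤ (Real.log n + 1) / ((n : ℝ) * ((n : ℝ) - 1)) := by
    apply div_le_div_of_nonneg_left (by linarith) (by nlinarith) (by nlinarith)
  have h3 : (Real.log ((n : ℝ) + 1) + 1) / (n : ℝ) ≤ (Real.log n + 1 / (n : ℝ) + 1) / n := by
    gcongr
  have hg : gfun n ≤ Real.log n / (n : ℝ) ^ 2 := by
    unfold gfun
    split
    · exact le_rfl
    · positivity
  linarith

noncomputable def bfun (n : ℕ) : ℝ := (Real.log n + 1) / ((n : ℝ) - 1)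

lemma bfun_nonneg (n : ℕ) (hn : 2 ≤ n) : 0 ≤ bfun n := by
  have ht : (2 : ℝ) ≤ (n : ℝ) := by exact_mod_cast hn
  have : 0 ≤ Real.log n := Real.log_nonneg (by linarith)
  unfold bfun
  apply div_nonneg <;> linarith

lemma key' (n : ℕ) (hn : 2 ≤ n) : gfun n ≤ bfun n - bfun (n + 1) := by
  have := key n hn
  unfold bfun
  push_cast
  convert this using 2
  ring

lemma partial_sum_le (N : ℕ) : ∑ i ∈ range N, gfun (i + 8) ≤ bfun 8 := by
  have h1 : ∑ i ∈ range N, gfun (i + 8) ≤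
      ∑ i ∈ range N, (bfun (i + 8) - bfun (i + 8 + 1)) := by
    apply Finset.sum_le_sum
    intro i _
    exact key' (i + 8) (by omega)
  have h2 : ∑ i ∈ range N, (bfun (i + 8) - bfun (i + 8 + 1)) = bfun 8 - bfun (N + 8) := by
    have := Finset.sum_range_sub' (fun i => bfun (i + 8)) N
    simpa using this
  have h3 : 0 ≤ bfun (N + 8) := bfun_nonneg _ (by omega)
  linarith

lemma summable_gfun_shift : Summable (fun i => gfun (i + 8)) :=
  summable_of_sum_range_le (fun i => gfun_nonneg _) partial_sum_le

lemma summable_gfun : Summable gfun :=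
  (summable_nat_add_iff 8).mp summable_gfun_shift

lemma tsum_gfun_lt : ∑' n, gfun n < 1 := by
  rw [← summable_gfun.sum_add_tsum_nat_add 8]
  have htail : ∑' i, gfun (i + 8) ≤ bfun 8 :=
    Real.tsum_le_of_sum_range_le (fun i => gfun_nonneg _) partial_sum_le
  have hhead : ∑ i ∈ range 8, gfun i =
      Real.log 2 / 4 + Real.log 3 / 9 + Real.log 5 / 25 + Real.log 7 / 49 := by
    simp only [Finset.sum_range_succ, Finset.sum_range_zero, gfun]
    norm_num [Nat.prime_iff]
  have hb8 : bfun 8 = (Real.log 8 + 1) / 7 := by unfold bfun; norm_num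
  have hl3 : Real.log 3 ≤ 2 * Real.log 2 := by
    calc Real.log 3 ≤ Real.log 4 := Real.log_le_log (by norm_num) (by norm_num)
      _ = 2 * Real.log 2 := by
        rw [show (4 : ℝ) = 2 ^ 2 by norm_num, Real.log_pow]; push_cast; ring
  have hl8 : Real.log 8 = 3 * Real.log 2 := by
    rw [show (8 : ℝ) = 2 ^ 3 by norm_num, Real.log_pow]; push_cast; ring
  have hl5 : Real.log 5 ≤ 3 * Real.log 2 := by
    calc Real.log 5 ≤ Real.log 8 := Real.log_le_log (by norm_num) (by norm_num)
      _ = 3 * Real.log 2 := hl8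
  have hl7 : Real.log 7 ≤ 3 * Real.log 2 := by
    calc Real.log 7 ≤ Real.log 8 := Real.log_le_log (by norm_num) (by norm_num)
      _ = 3 * Real.log 2 := hl8
  have hl2 : Real.log 2 < 0.6931471808 := Real.log_two_lt_d9
  have hl2' : 0 ≤ Real.log 2 := Real.log_nonneg (by norm_num)
  rw [hhead]
  nlinarith [htail, hb8]

theorem stmt7 (s : ℝ) (hs : 2 ≤ s) :
    ∑' p : Nat.Primes, Real.log (p : ℕ) / ((p : ℕ) : ℝ) ^ s < 1 := by
  set f : Nat.Primes → ℝ := fun p => Real.log (p : ℕ) / ((p : ℕ) : ℝ) ^ s with hf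
  have hle : ∀ p : Nat.Primes, f p ≤ gfun (p : ℕ) := by
    intro p
    have hp2 : (2 : ℝ) ≤ ((p : ℕ) : ℝ) := by exact_mod_cast p.2.two_le
    have hlog : 0 ≤ Real.log (p : ℕ) := Real.log_nonneg (by linarith)
    have hpow : ((p : ℕ) : ℝ) ^ 2 ≤ ((p : ℕ) : ℝ) ^ s := by
      rw [show ((p : ℕ) : ℝ) ^ 2 = ((p : ℕ) : ℝ) ^ ((2 : ℕ) : ℝ) by
        rw [Real.rpow_natCast]]
      exact Real.rpow_le_rpow_of_exponent_le (by linarith) (by exact_mod_cast hs)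
    have : Real.log (p : ℕ) / ((p : ℕ) : ℝ) ^ s ≤ Real.log (p : ℕ) / ((p : ℕ) : ℝ) ^ 2 :=
      div_le_div_of_nonneg_left hlog (by positivity) hpow
    simpa [gfun, p.2] using this
  have hf_nonneg : ∀ p : Nat.Primes, 0 ≤ f p := by
    intro p
    have hp2 : (2 : ℝ) ≤ ((p : ℕ) : ℝ) := by exact_mod_cast p.2.two_le
    have : (0:ℝ) < ((p : ℕ) : ℝ) ^ s := Real.rpow_pos_of_pos (by linarith) s
    exact div_nonneg (Real.log_nonneg (by linarith)) this.le
  have hinj : Function.Injective (fun p : Nat.Primes => (p : ℕ)) :=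
    Nat.Primes.coe_nat_injective
  have hcomp : Summable (fun p : Nat.Primes => gfun (p : ℕ)) :=
    summable_gfun.comp_injective hinj
  have hfs : Summable f := Summable.of_nonneg_of_le hf_nonneg hle hcomp
  calc ∑' p : Nat.Primes, f p ≤ ∑' n, gfun n :=
        hfs.tsum_le_tsum_of_inj _ hinj (fun n _ => gfun_nonneg n) hle summable_gfun
    _ < 1 := tsum_gfun_lt
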